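/- arXiv:1804.05629 — 4 statements merged into one kernel-verified Lean document; each statement's English description precedes it below -/
import Mathlib

section
/- Let D be a triangulated category with a t-structure with heart A. For objects X, Y in A, the canonical map θ^1 : Yext^1_A(X, Y) → Hom_D(X, Σ(Y)), sending the class of a short exact sequence 0 → Y → E → X → 0 to the connecting morphism of the corresponding exact triangle Y → E → X → Σ(Y), is a bijection (an isomorphism of groups). -/
open CategoryTheory Category Limits Pretriangulated Triangulated ZeroObject

namespace HRS

variable (A : Type*) [Category A] [Abelian A]

/-- A short exact sequence `0 ⟶ Y ⟶ E ⟶ X ⟶ 0` in `A`, i.e. an extension of `X` by `Y`. -/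
structure SES (X Y : A) where
  E : A
  i : Y ⟶ E
  p : E ⟶ X
  w : i ≫ p = 0
  ex : (ShortComplex.mk i p w).ShortExact

/-- A torsion pair `(T, F)` in the abelian category `A`. -/
structure TorsionPair (T F : A → Prop) : Prop where
  hom_zero : ∀ ⦃t f : A⦄, T t → F f → ∀ (g : t ⟶ f), g = 0
  exists_ses : ∀ X : A, ∃ (t f : A) (i : t ⟶ X) (p : X ⟶ f) (w : i ≫ p = 0),
    T t ∧ F f ∧ (ShortComplex.mk i p w).ShortExact

/-- `n`-fold Yoneda extensions of `X` by `Y`, presented as iterated splices of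
short exact sequences. -/
inductive ExtSeq : ℕ → A → A → Type _
  | base {X Y : A} (s : SES A X Y) : ExtSeq 1 X Y
  | splice {n : ℕ} {X Y Z : A} (s : SES A Z Y) (ξ : ExtSeq n X Z) : ExtSeq (n + 1) X Y

/-- Morphisms of Yoneda extensions over a pair of morphisms on the two end terms. -/
inductive ExtHom : ∀ {n : ℕ} {X X' Y Y' : A}, (Y ⟶ Y') → (X ⟶ X') →
    ExtSeq A n X Y → ExtSeq A n X' Y' → Prop
  | base {X X' Y Y' : A} {a : Y ⟶ Y'} {b : X ⟶ X'} (s : SES A X Y) (s' : SES A X' Y')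
      (e : s.E ⟶ s'.E) (h1 : s.i ≫ e = a ≫ s'.i) (h2 : s.p ≫ b = e ≫ s'.p) :
      ExtHom a b (.base s) (.base s')
  | splice {n : ℕ} {X X' Y Y' Z Z' : A} {a : Y ⟶ Y'} {b : X ⟶ X'} (t : Z ⟶ Z')
      (s : SES A Z Y) (s' : SES A Z' Y') (ξ : ExtSeq A n X Z) (ξ' : ExtSeq A n X' Z')
      (e : s.E ⟶ s'.E) (h1 : s.i ≫ e = a ≫ s'.i) (h2 : s.p ≫ t = e ≫ s'.p)
      (h : ExtHom t b ξ ξ') :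
      ExtHom a b (.splice s ξ) (.splice s' ξ')

/-- The Yoneda equivalence relation on `n`-fold extensions of `X` by `Y`: the equivalence
relation generated by the existence of a morphism of extensions which is the identity
on both end terms. -/
def ExtEquiv {n : ℕ} {X Y : A} (ξ ξ' : ExtSeq A n X Y) : Prop :=
  Relation.EqvGen (fun ζ ζ' => ExtHom A (𝟙 Y) (𝟙 X) ζ ζ') ξ ξ'

/-- The `n`-th Yoneda extension group (as a set) `Yext^n_A(X, Y)`. -/
def Yext (n : ℕ) (X Y : A) : Type _ :=
  Quot (fun ξ ξ' : ExtSeq A n X Y => ExtHom A (𝟙 Y) (𝟙 X) ξ ξ')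

/-- The class of an extension in `Yext`. -/
def Yext.mk {n : ℕ} {X Y : A} (ξ : ExtSeq A n X Y) : Yext A n X Y := Quot.mk _ ξ

/-- The short exact sequence `0 ⟶ Y ⟶ Y ⟶ 0 ⟶ 0`. -/
noncomputable def sesToZero (Y : A) : SES A (0 : A) Y where
  E := Y
  i := 𝟙 Y
  p := 0
  w := by simp
  ex := (ShortComplex.Splitting.shortExact
    { r := 𝟙 Y
      s := 0
      f_r := by simp
      s_g := by apply Subsingleton.elim
      id := by simp })

/-- The short exact sequence `0 ⟶ 0 ⟶ 0 ⟶ 0 ⟶ 0`. -/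
noncomputable def sesZero : SES A (0 : A) (0 : A) where
  E := 0
  i := 0
  p := 0
  w := by simp
  ex := (ShortComplex.Splitting.shortExact
    { r := 0
      s := 0
      f_r := by apply Subsingleton.elim
      s_g := by apply Subsingleton.elim
      id := by apply Subsingleton.elim })

/-- The short exact sequence `0 ⟶ 0 ⟶ X ⟶ X ⟶ 0`. -/
noncomputable def sesFromZero (X : A) : SES A X (0 : A) where
  E := X
  i := 0
  p := 𝟙 X
  w := by simp
  ex := (ShortComplex.Splitting.shortExact
    { r := 0
      s := 𝟙 X
      f_r := by apply Subsingleton.elim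
      s_g := by simp
      id := by simp })

/-- The trivial 3-fold extension `0 → Y → Y → 0 → X → X → 0`, representing the zero
class in `Yext^3_A(X, Y)`. -/
noncomputable def trivialExt3 (X Y : A) : ExtSeq A 3 X Y :=
  ExtSeq.splice (sesToZero A Y) (ExtSeq.splice (sesZero A) (ExtSeq.base (sesFromZero A X)))

/-- `Sub P`: subobjects of objects satisfying `P`. -/
def SubP (P : A → Prop) (X : A) : Prop := ∃ (U : A) (m : X ⟶ U), P U ∧ Mono m

/-- `Fac P`: quotient objects of objects satisfying `P`. -/
def FacP (P : A → Prop) (X : A) : Prop := ∃ (U : A) (p : U ⟶ X), P U ∧ Epi p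

/-- `P * Q`: objects that are extensions of an object satisfying `Q` by one satisfying `P`. -/
def StarP (P Q : A → Prop) (X : A) : Prop :=
  ∃ (u v : A) (i : u ⟶ X) (p : X ⟶ v) (w : i ≫ p = 0),
    P u ∧ Q v ∧ (ShortComplex.mk i p w).ShortExact

variable (D : Type*) [Category D] [HasZeroObject D] [Preadditive D] [HasShift D ℤ]
  [∀ n : ℤ, (shiftFunctor D n).Additive] [Pretriangulated D]

/-- The heart of a t-structure, as a predicate on objects. -/
def heartProp (t : TStructure D) (X : D) : Prop := t.le 0 X ∧ t.ge 0 X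

/-- A t-structure is bounded if every object lies in some `Σ^i D^{≤0} ∩ Σ^j D^{≥0}`. -/
def IsBoundedTStructure (t : TStructure D) : Prop := ∀ X : D, ∃ a b : ℤ, t.ge a X ∧ t.le b X

/-- Data realizing an abelian category `A` as the heart of a t-structure `t` on `D`:
a fully faithful additive functor `A ⥤ D` whose essential image is the heart of `t`. -/
structure HeartData (t : TStructure D) where
  ι : A ⥤ D
  additive : ι.Additive
  full : ι.Full
  faithful : ι.Faithful
  essImage_iff : ∀ X : D, ι.essImage X ↔ heartProp D t X

variable {A D}

/-- The property, for a family `θ` of maps from `n`-fold Yoneda extensions in the heart to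
`Hom_D(X, Σ^n Y)`, of being the canonical family: it descends to the Yoneda extension
groups, `θ^1` sends a short exact sequence to the connecting morphism of an associated
distinguished triangle, and `θ^{n+1}` is computed on splices by `Σ^n(θ^1 ξ₁) ∘ θ^n ξ₂`. -/
structure IsCanThetaFamily {t : TStructure D} (h : HeartData A D t)
    (θ : ∀ (n : ℕ) (X Y : A), ExtSeq A n X Y → (h.ι.obj X ⟶ (h.ι.obj Y)⟦(n : ℤ)⟧)) : Prop where
  compat : ∀ {n : ℕ} {X Y : A} (ξ ξ' : ExtSeq A n X Y), ExtEquiv A ξ ξ' →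
    θ n X Y ξ = θ n X Y ξ'
  base : ∀ {X Y : A} (s : SES A X Y),
    Triangle.mk (h.ι.map s.i) (h.ι.map s.p)
      (θ 1 X Y (.base s) ≫ eqToHom (by norm_num)) ∈ distTriang D
  splice : ∀ {n : ℕ} {X Y Z : A} (s : SES A Z Y) (ξ : ExtSeq A n X Z),
    θ (n + 1) X Y (.splice s ξ) = θ n X Z ξ ≫ (θ 1 Z Y (.base s))⟦(n : ℤ)⟧' ≫
      (shiftFunctorAdd' D ((1 : ℕ) : ℤ) ((n : ℕ) : ℤ) (((n + 1 : ℕ)) : ℤ)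
        (by push_cast; ring)).inv.app (h.ι.obj Y)

/-- The map induced by `θ^n` on the Yoneda extension group `Yext^n(X, Y)`. -/
def thetaBar {t : TStructure D} {h : HeartData A D t}
    (θ : ∀ (n : ℕ) (X Y : A), ExtSeq A n X Y → (h.ι.obj X ⟶ (h.ι.obj Y)⟦(n : ℤ)⟧))
    (hθ : IsCanThetaFamily h θ) (n : ℕ) (X Y : A) :
    Yext A n X Y → (h.ι.obj X ⟶ (h.ι.obj Y)⟦(n : ℤ)⟧) :=
  Quot.lift (θ n X Y) (fun ξ ξ' hr => hθ.compat ξ ξ' (Relation.EqvGen.rel _ _ hr))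

variable (A D)

/-- The image of a short exact sequence under an exact functor. -/
def mapSES {A' : Type*} [Category A'] [Abelian A'] (G : A' ⥤ A) [G.Additive]
    (hG : ∀ S : ShortComplex A', S.ShortExact → (S.map G).ShortExact)
    {X Y : A'} (s : SES A' X Y) : SES A (G.obj X) (G.obj Y) where
  E := G.obj s.E
  i := G.map s.i
  p := G.map s.p
  w := by rw [← G.map_comp, s.w]; exact G.map_zero _ _
  ex := hG _ s.ex

/-- The image of a Yoneda extension under an exact functor. -/
def mapExtSeq {A' : Type*} [Category A'] [Abelian A'] (G : A' ⥤ A) [G.Additive]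
    (hG : ∀ S : ShortComplex A', S.ShortExact → (S.map G).ShortExact) :
    ∀ {n : ℕ} {X Y : A'}, ExtSeq A' n X Y → ExtSeq A n (G.obj X) (G.obj Y)
  | _, _, _, .base s => .base (mapSES A G hG s)
  | _, _, _, .splice s ξ => .splice (mapSES A G hG s) (mapExtSeq G hG ξ)

/-- Composition of a chain of morphisms `Σ^i X_i ⟶ Σ^{i+1} X_{i+1}` in `D`,
with all `X_i` in the heart. -/
def chainComp (ι : A ⥤ D) (obj : ℕ → A)
    (g : ∀ i : ℕ, ((ι.obj (obj i))⟦((i : ℕ) : ℤ)⟧ ⟶ (ι.obj (obj (i + 1)))⟦(((i + 1 : ℕ)) : ℤ)⟧)) :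
    ∀ n : ℕ, ((ι.obj (obj 0))⟦((0 : ℕ) : ℤ)⟧ ⟶ (ι.obj (obj n))⟦((n : ℕ) : ℤ)⟧)
  | 0 => 𝟙 _
  | n + 1 => chainComp ι obj g n ≫ g n

/-- A model of the bounded derived category `D^b(A)` of an abelian category `A`:
a triangulated category equipped with a bounded t-structure whose heart is `A`,
such that the canonical maps `Yext^n_A(X, Y) → Hom(X, Σ^n Y)` are bijective for all
`n ≥ 1` (the characteristic-class isomorphisms of the bounded derived category). -/
structure DerivedData where
  t : TStructure D
  bounded : IsBoundedTStructure D t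
  heart : HeartData A D t
  θ : ∀ (n : ℕ) (X Y : A), ExtSeq A n X Y → (heart.ι.obj X ⟶ (heart.ι.obj Y)⟦(n : ℤ)⟧)
  can : IsCanThetaFamily heart θ
  bij : ∀ (n : ℕ), 1 ≤ n → ∀ (X Y : A), Function.Bijective (thetaBar θ can n X Y)

variable {A D}

/-- Membership in the HRS-tilt `B = Σ(F) * T` of `A` with respect to a torsion pair
`(T, F)`, for an object of (a model of) `D^b(A)`. -/
def HRSTiltMem {t : TStructure D} (h : HeartData A D t) (T F : A → Prop) (X : D) : Prop :=
  ∃ (f tt : A), F f ∧ T tt ∧ ∃ (g : (h.ι.obj f)⟦(1 : ℤ)⟧ ⟶ X) (g' : X ⟶ h.ι.obj tt)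
    (δ : h.ι.obj tt ⟶ ((h.ι.obj f)⟦(1 : ℤ)⟧)⟦(1 : ℤ)⟧), Triangle.mk g g' δ ∈ distTriang D

/-!
For `X`, `Y` in the heart, `Hom(Σ Y, X) = 0 = Hom(X, Σ⁻¹ Y)`. Hence the long exact `Hom`
sequences of a distinguished triangle `Y → E → X → Σ Y` with `E` in the heart say exactly that
`0 → Y → E → X → 0` is short exact, and every `δ : X → Σ Y` is the third morphism of such a
triangle, because the heart is closed under extensions. This gives surjectivity. For injectivity,
two extensions with the same `δ` are compared by a morphism of triangles extending the identities,
which comes from a morphism of extensions since the heart is a full subcategory.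
-/

section Pretriangulated

variable {C : Type*} [Category C] [HasZeroObject C] [Preadditive C] [HasShift C ℤ]
  [∀ n : ℤ, (shiftFunctor C n).Additive] [Pretriangulated C]

/-- Comparing the two triangles by `(𝟙, 𝟙, c)`, the map `c - 𝟙` kills `g`, hence factors
through `δ` via some morphism `X⟦1⟧ ⟶ Z`, which vanishes. -/
lemma mor₃_eq_of_distTriang {X Y Z : C} {f : X ⟶ Y} {g : Y ⟶ Z} {δ δ' : Z ⟶ X⟦(1 : ℤ)⟧}
    (hδ : Triangle.mk f g δ ∈ distTriang C) (hδ' : Triangle.mk f g δ' ∈ distTriang C)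
    (hZ : ∀ u : X⟦(1 : ℤ)⟧ ⟶ Z, u = 0) : δ = δ' := by
  obtain ⟨c, hgc, hδc⟩ : ∃ c : Z ⟶ Z, g ≫ c = 𝟙 Y ≫ g ∧ δ ≫ (𝟙 X)⟦(1 : ℤ)⟧' = c ≫ δ' :=
    complete_distinguished_triangle_morphism _ _ hδ hδ' (𝟙 X) (𝟙 Y)
      ((comp_id f).trans (id_comp f).symm)
  rw [id_comp] at hgc
  rw [CategoryTheory.Functor.map_id, comp_id] at hδc
  obtain ⟨u, hu⟩ : ∃ u : X⟦(1 : ℤ)⟧ ⟶ Z, c - 𝟙 Z = δ ≫ u :=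
    Triangle.yoneda_exact₃ _ hδ (c - 𝟙 Z)
      (by change g ≫ (c - 𝟙 Z) = 0; rw [Preadditive.comp_sub, hgc, comp_id, sub_self])
  rw [hZ u, comp_zero, sub_eq_zero] at hu
  rw [hδc, hu, id_comp]

end Pretriangulated

section Heart

variable {A : Type*} [Category A] [Abelian A]
  {D : Type*} [Category D] [HasZeroObject D] [Preadditive D] [HasShift D ℤ]
  [∀ n : ℤ, (shiftFunctor D n).Additive] [Pretriangulated D]
  {t : TStructure D} (h : HeartData A D t)

instance : h.ι.Additive := h.additive

instance : h.ι.Full := h.full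

instance : h.ι.Faithful := h.faithful

instance isLE_obj (X : A) : t.IsLE (h.ι.obj X) 0 :=
  ⟨((h.essImage_iff _).1 (h.ι.obj_mem_essImage X)).1⟩

instance isGE_obj (X : A) : t.IsGE (h.ι.obj X) 0 :=
  ⟨((h.essImage_iff _).1 (h.ι.obj_mem_essImage X)).2⟩

lemma hom_shift_one_eq_zero {X Y : A} (u : (h.ι.obj Y)⟦(1 : ℤ)⟧ ⟶ h.ι.obj X) : u = 0 :=
  have := t.isLE_shift (h.ι.obj Y) 0 1 (-1)
  t.zero u (-1) 0

lemma hom_shift_neg_one_eq_zero {X Y : A} (u : h.ι.obj X ⟶ (h.ι.obj Y)⟦(-1 : ℤ)⟧) : u = 0 :=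
  have := t.isGE_shift (h.ι.obj Y) 0 (-1) 1
  t.zero u 0 1

lemma essImage_of_distTriang {X Y : A} {Z : D} {f : h.ι.obj Y ⟶ Z} {g : Z ⟶ h.ι.obj X}
    {δ : h.ι.obj X ⟶ (h.ι.obj Y)⟦(1 : ℤ)⟧} (hT : Triangle.mk f g δ ∈ distTriang D) :
    h.ι.essImage Z :=
  (h.essImage_iff Z).2
    ⟨(t.isLE₂ _ hT 0 (isLE_obj h Y) (isLE_obj h X)).le,
      (t.isGE₂ _ hT 0 (isGE_obj h Y) (isGE_obj h X)).ge⟩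

section DistTriang

variable {h} {X Y E : A} {i : Y ⟶ E} {p : E ⟶ X} {δ : h.ι.obj X ⟶ (h.ι.obj Y)⟦(1 : ℤ)⟧}
  (hT : Triangle.mk (h.ι.map i) (h.ι.map p) δ ∈ distTriang D)
include hT

lemma comp_eq_zero_of_distTriang : i ≫ p = 0 :=
  h.ι.map_injective (by rw [h.ι.map_comp, h.ι.map_zero]; exact comp_distTriang_mor_zero₁₂ _ hT)

lemma mono_of_distTriang : Mono i := by
  refine (Preadditive.mono_iff_cancel_zero i).2 fun W g hg => h.ι.map_injective ?_
  obtain ⟨u, hu⟩ : ∃ u : h.ι.obj W ⟶ (h.ι.obj X)⟦(-1 : ℤ)⟧, h.ι.map g = u ≫ _ :=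
    Triangle.coyoneda_exact₂ _ (inv_rot_of_distTriang _ hT) (h.ι.map g)
      (by change h.ι.map g ≫ h.ι.map i = 0; rw [← h.ι.map_comp, hg, h.ι.map_zero])
  rw [Functor.map_zero, hu, hom_shift_neg_one_eq_zero h u]
  exact zero_comp

lemma epi_of_distTriang : Epi p := by
  refine (Preadditive.epi_iff_cancel_zero p).2 fun W g hg => h.ι.map_injective ?_
  obtain ⟨u, hu⟩ : ∃ u : (h.ι.obj Y)⟦(1 : ℤ)⟧ ⟶ h.ι.obj W, h.ι.map g = δ ≫ u :=
    Triangle.yoneda_exact₃ _ hT (h.ι.map g)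
      (by change h.ι.map p ≫ h.ι.map g = 0; rw [← h.ι.map_comp, hg, h.ι.map_zero])
  rw [Functor.map_zero, hu, hom_shift_one_eq_zero h u, comp_zero]

lemma shortExact_of_distTriang :
    (ShortComplex.mk i p (comp_eq_zero_of_distTriang hT)).ShortExact := by
  have := mono_of_distTriang hT
  have := epi_of_distTriang hT
  refine { exact := ShortComplex.exact_of_f_is_kernel _ ?_ }
  refine KernelFork.IsLimit.ofι' i _ fun {W} k hk => ?_
  have hl : ∃ l : h.ι.obj W ⟶ h.ι.obj Y, h.ι.map k = l ≫ h.ι.map i :=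
    Triangle.coyoneda_exact₂ _ hT (h.ι.map k)
      (by change h.ι.map k ≫ h.ι.map p = 0; rw [← h.ι.map_comp, hk, h.ι.map_zero])
  exact ⟨h.ι.preimage hl.choose,
    h.ι.map_injective (by rw [h.ι.map_comp, h.ι.map_preimage, ← hl.choose_spec])⟩

end DistTriang

lemma exists_ses_of_distTriang {X Y : A} (δ : h.ι.obj X ⟶ (h.ι.obj Y)⟦(1 : ℤ)⟧) :
    ∃ s : SES A X Y, Triangle.mk (h.ι.map s.i) (h.ι.map s.p) δ ∈ distTriang D := by
  obtain ⟨Z, g₁, g₂, hT⟩ := distinguished_cocone_triangle₂ δ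
  obtain ⟨E, ⟨e⟩⟩ := essImage_of_distTriang h hT
  have hT' : Triangle.mk (h.ι.map (h.ι.preimage (g₁ ≫ e.inv)))
      (h.ι.map (h.ι.preimage (e.hom ≫ g₂))) δ ∈ distTriang D := by
    refine isomorphic_distinguished _ hT _
      (Triangle.isoMk _ _ (Iso.refl _) e (Iso.refl _) ?_ ?_ ?_)
    · change h.ι.map (h.ι.preimage (g₁ ≫ e.inv)) ≫ e.hom = 𝟙 (h.ι.obj Y) ≫ g₁
      simp
    · change h.ι.map (h.ι.preimage (e.hom ≫ g₂)) ≫ 𝟙 (h.ι.obj X) = e.hom ≫ g₂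
      simp
    · change δ ≫ (𝟙 (h.ι.obj Y))⟦(1 : ℤ)⟧' = 𝟙 (h.ι.obj X) ≫ δ
      simp
  exact ⟨⟨E, _, _, _, shortExact_of_distTriang hT'⟩, hT'⟩

lemma extHom_base_of_distTriang {X Y : A} {s s' : SES A X Y}
    {δ : h.ι.obj X ⟶ (h.ι.obj Y)⟦(1 : ℤ)⟧}
    (hs : Triangle.mk (h.ι.map s.i) (h.ι.map s.p) δ ∈ distTriang D)
    (hs' : Triangle.mk (h.ι.map s'.i) (h.ι.map s'.p) δ ∈ distTriang D) :
    ExtHom A (𝟙 Y) (𝟙 X) (.base s) (.base s') := by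
  obtain ⟨c, hic, hcp⟩ : ∃ c : h.ι.obj s.E ⟶ h.ι.obj s'.E,
      h.ι.map s.i ≫ c = 𝟙 _ ≫ h.ι.map s'.i ∧ h.ι.map s.p ≫ 𝟙 _ = c ≫ h.ι.map s'.p :=
    complete_distinguished_triangle_morphism₂ _ _ hs hs' (𝟙 _) (𝟙 _)
      (by change δ ≫ (𝟙 (h.ι.obj Y))⟦(1 : ℤ)⟧' = 𝟙 (h.ι.obj X) ≫ δ; simp)
  refine .base s s' (h.ι.preimage c) (h.ι.map_injective ?_) (h.ι.map_injective ?_)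
  · simpa using hic
  · simpa using hcp

end Heart

lemma Yext.exists_base {A : Type*} [Category A] [Abelian A] {X Y : A} (a : Yext A 1 X Y) :
    ∃ s : SES A X Y, a = Yext.mk A (.base s) := by
  obtain ⟨ξ, rfl⟩ := Quot.exists_rep a
  match ξ with
  | .base s => exact ⟨s, rfl⟩

/-- The canonical map `θ^1 : Yext^1_A(X, Y) → Hom_D(X, Σ Y)` is a bijection. -/
theorem statement_4 {A : Type*} [Category A] [Abelian A]
    {D : Type*} [Category D] [HasZeroObject D] [Preadditive D] [HasShift D ℤ]
    [∀ n : ℤ, (shiftFunctor D n).Additive] [Pretriangulated D]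
    {t : TStructure D} (h : HeartData A D t)
    (θ : ∀ (n : ℕ) (X Y : A), ExtSeq A n X Y → (h.ι.obj X ⟶ (h.ι.obj Y)⟦(n : ℤ)⟧))
    (hθ : IsCanThetaFamily h θ) (X Y : A) :
    Function.Bijective (thetaBar θ hθ 1 X Y) := by
  have hshift : (h.ι.obj Y)⟦((1 : ℕ) : ℤ)⟧ = (h.ι.obj Y)⟦(1 : ℤ)⟧ := by norm_num
  constructor
  · intro a a' haa'
    obtain ⟨s, rfl⟩ := Yext.exists_base a
    obtain ⟨s', rfl⟩ := Yext.exists_base a'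
    change θ 1 X Y (.base s) = θ 1 X Y (.base s') at haa'
    exact Quot.sound (extHom_base_of_distTriang h (hθ.base s) (haa' ▸ hθ.base s'))
  · intro f
    obtain ⟨s, hs⟩ := exists_ses_of_distTriang h (f ≫ eqToHom hshift)
    refine ⟨Yext.mk A (.base s), (cancel_mono (eqToHom hshift)).1 ?_⟩
    exact mor₃_eq_of_distTriang (hθ.base s) hs (hom_shift_one_eq_zero h)

end HRS
end

section
/- Let D be a triangulated category with a t-structure with heart A, and let n ≥ 2. Assume that the canonical maps θ^n_{A,B} : Yext^n_A(A,B) → Hom_D(A, Σ^n B) are isomorphisms for all objects A, B of A. Then for all X, Y ∈ A the canonical map θ^{n+1}_{X,Y} : Yext^{n+1}_A(X, Y) → Hom_D(X, Σ^{n+1}(Y)) is injective. -/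
/-!
Write the two `(n+1)`-extensions as splices `s ∪ ζ` and `s' ∪ ζ'`, with `s` an extension of `Z`
by `Y` and `s'` one of `Z'` by `Y`. The heart is closed under extensions, so `θ¹` is surjective and
there is a single extension `s₀` of `Z ⊞ Z'` by `Y` with class `(θ¹ s, -θ¹ s')`; it pulls back to
`s` and `s'`, so the two extensions become splices `s₀ ∪ μ` and `s₀ ∪ μ'`. Equality of their
images says that `θⁿ μ - θⁿ μ'` is killed by `Σⁿ θ¹ s₀`, hence factors through the middle term
`E₀` of `s₀`. Bijectivity of `θⁿ` realises this factorization by an `n`-extension `κ` of `X` by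
`(Z ⊞ Z') ⊞ E₀` pushing forward to both `μ` and `μ'`, and both splices are then Yoneda equivalent
to the splice of `κ` with one common pullback of `s₀`.
-/

open CategoryTheory Category Limits Pretriangulated Triangulated ZeroObject

namespace HRS

variable (A : Type*) [Category A] [Abelian A]

variable (D : Type*) [Category D] [HasZeroObject D] [Preadditive D] [HasShift D ℤ]
  [∀ n : ℤ, (shiftFunctor D n).Additive] [Pretriangulated D]

variable {A D}

variable (A D)

variable {A D}

lemma heartProp_obj₂_of_distTriang {t : TStructure D} (T : Triangle D) (hT : T ∈ distTriang D)
    (h₁ : heartProp D t T.obj₁) (h₃ : heartProp D t T.obj₃) : heartProp D t T.obj₂ :=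
  ⟨(t.isLE₂ T hT 0 ⟨h₁.1⟩ ⟨h₃.1⟩).le, (t.isGE₂ T hT 0 ⟨h₁.2⟩ ⟨h₃.2⟩).ge⟩

lemma coyoneda_exact₃_shift (T : Triangle D) (hT : T ∈ distTriang D) (k : ℤ) {P : D}
    (f : P ⟶ T.obj₃⟦k⟧) (hf : f ≫ T.mor₃⟦k⟧' = 0) :
    ∃ g : P ⟶ T.obj₂⟦k⟧, f = g ≫ T.mor₂⟦k⟧' := by
  have hTk : Triangle.mk (k.negOnePow • T.mor₁⟦k⟧') (k.negOnePow • T.mor₂⟦k⟧')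
      (k.negOnePow • T.mor₃⟦k⟧' ≫ (shiftFunctorComm D 1 k).hom.app T.obj₁) ∈ distTriang D :=
    Triangle.shift_distinguished T hT k
  obtain ⟨g, hg⟩ : ∃ g : P ⟶ T.obj₂⟦k⟧, f = g ≫ (k.negOnePow • T.mor₂⟦k⟧') :=
    Triangle.coyoneda_exact₃ _ hTk f (by
      change f ≫ (k.negOnePow • T.mor₃⟦k⟧' ≫ (shiftFunctorComm D 1 k).hom.app T.obj₁) = 0
      rw [Linear.comp_units_smul, reassoc_of% hf, zero_comp, smul_zero])
  exact ⟨k.negOnePow • g, by rwa [Linear.units_smul_comp, ← Linear.comp_units_smul]⟩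

namespace HeartData

variable {t : TStructure D} (h : HeartData A D t)

instance : h.ι.Additive := h.additive
instance : h.ι.Full := h.full
instance : h.ι.Faithful := h.faithful

lemma heartProp_obj (X : A) : heartProp D t (h.ι.obj X) :=
  (h.essImage_iff _).1 (h.ι.obj_mem_essImage X)

instance (X : A) : t.IsLE (h.ι.obj X) 0 := ⟨(h.heartProp_obj X).1⟩
instance (X : A) : t.IsGE (h.ι.obj X) 0 := ⟨(h.heartProp_obj X).2⟩

lemma hom_shift_eq_zero ⦃X Y : A⦄ ⦃n : ℤ⦄ (f : h.ι.obj X ⟶ (h.ι.obj Y)⟦n⟧) (hn : n < 0) :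
    f = 0 :=
  have := t.isGE_shift (h.ι.obj Y) 0 n (-n)
  t.zero f 0 (-n)

lemma shift_one_hom_eq_zero {X Y : A} (f : (h.ι.obj Y)⟦(1 : ℤ)⟧ ⟶ h.ι.obj X) : f = 0 :=
  have := t.isLE_shift (h.ι.obj Y) 0 1 (-1)
  t.zero f (-1) 0

lemma eq_of_distTriang_mor₂_comp_eq {X X' Y : A} {E : D} {f : h.ι.obj Y ⟶ E}
    {g : E ⟶ h.ι.obj X} {d : h.ι.obj X ⟶ (h.ι.obj Y)⟦(1 : ℤ)⟧}
    (hT : Triangle.mk f g d ∈ distTriang D) {c c' : h.ι.obj X ⟶ h.ι.obj X'}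
    (hc : g ≫ c = g ≫ c') : c = c' := by
  obtain ⟨w, hw⟩ : ∃ w : (h.ι.obj Y)⟦(1 : ℤ)⟧ ⟶ h.ι.obj X', c - c' = d ≫ w :=
    Triangle.yoneda_exact₃ _ hT (c - c') (by
      change g ≫ (c - c') = 0
      rw [Preadditive.comp_sub, hc, sub_self])
  rw [← sub_eq_zero, hw, h.shift_one_hom_eq_zero w, comp_zero]

lemma distTriang_mor₃_unique {X Y : A} {E : D} {f : h.ι.obj Y ⟶ E} {g : E ⟶ h.ι.obj X}
    {d d' : h.ι.obj X ⟶ (h.ι.obj Y)⟦(1 : ℤ)⟧} (hd : Triangle.mk f g d ∈ distTriang D)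
    (hd' : Triangle.mk f g d' ∈ distTriang D) : d = d' := by
  obtain ⟨c, hc₂, hc₃⟩ : ∃ c : h.ι.obj X ⟶ h.ι.obj X, g ≫ c = 𝟙 E ≫ g ∧
      d ≫ (𝟙 (h.ι.obj Y))⟦(1 : ℤ)⟧' = c ≫ d' :=
    complete_distinguished_triangle_morphism _ _ hd hd' (𝟙 _) (𝟙 E)
      ((comp_id f).trans (id_comp f).symm)
  have hc : c = 𝟙 _ := h.eq_of_distTriang_mor₂_comp_eq hd (by simpa using hc₂)
  simpa [hc] using hc₃

lemma shortExact_of_distTriang {X Y E : A} (i : Y ⟶ E) (p : E ⟶ X)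
    {δ : h.ι.obj X ⟶ (h.ι.obj Y)⟦(1 : ℤ)⟧}
    (hT : Triangle.mk (h.ι.map i) (h.ι.map p) δ ∈ distTriang D) (w : i ≫ p = 0) :
    (ShortComplex.mk i p w).ShortExact :=
  have hK := AbelianSubcategory.isLimitKernelForkOfDistTriang h.hom_shift_eq_zero i p δ hT
  have hC := AbelianSubcategory.isColimitCokernelCoforkOfDistTriang h.hom_shift_eq_zero i p δ hT
  { exact := ShortComplex.exact_of_f_is_kernel _ hK
    mono_f := mono_of_isLimit_fork hK
    epi_g := epi_of_isColimit_cofork hC }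

end HeartData

lemma ExtSeq.exists_eq_splice {n : ℕ} {X Y : A} (ξ : ExtSeq A (n + 1) X Y) (hn : 1 ≤ n) :
    ∃ (Z : A) (s : SES A Z Y) (ζ : ExtSeq A n X Z), ξ = .splice s ζ := by
  cases ξ with
  | base s => omega
  | splice s ζ => exact ⟨_, s, ζ, rfl⟩

lemma ExtHom.refl {n : ℕ} {X Y : A} (ξ : ExtSeq A n X Y) : ExtHom A (𝟙 Y) (𝟙 X) ξ ξ := by
  induction ξ with
  | base s => exact .base s s (𝟙 _) (by simp) (by simp)
  | splice s ζ ih => exact .splice (𝟙 _) s s ζ ζ (𝟙 _) (by simp) (by simp) ih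

lemma Yext.mk_splice_congr {n : ℕ} {X Y Z : A} (s : SES A Z Y) {ζ ζ' : ExtSeq A n X Z}
    (hζ : Yext.mk A ζ = Yext.mk A ζ') : Yext.mk A (.splice s ζ) = Yext.mk A (.splice s ζ') :=
  congrArg (Quot.lift (fun ζ => Yext.mk A (.splice s ζ)) fun _ _ hr =>
    Quot.sound (.splice (𝟙 Z) s s _ _ (𝟙 s.E) (by simp) (by simp) hr)) hζ

namespace IsCanThetaFamily

variable {t : TStructure D} {h : HeartData A D t}
  {θ : ∀ (n : ℕ) (X Y : A), ExtSeq A n X Y → (h.ι.obj X ⟶ (h.ι.obj Y)⟦(n : ℤ)⟧)}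

lemma base_distTriang (hθ : IsCanThetaFamily h θ) {X Y : A} (s : SES A X Y) :
    Triangle.mk (h.ι.map s.i) (h.ι.map s.p)
      (θ 1 X Y (.base s) : h.ι.obj X ⟶ (h.ι.obj Y)⟦(1 : ℤ)⟧) ∈ distTriang D := by
  simpa using hθ.base s

lemma exists_base_eq (hθ : IsCanThetaFamily h θ) {X Y : A}
    (δ : h.ι.obj X ⟶ (h.ι.obj Y)⟦((1 : ℕ) : ℤ)⟧) : ∃ s : SES A X Y, θ 1 X Y (.base s) = δ := by
  obtain ⟨V, f, g, hT⟩ := distinguished_cocone_triangle₂ (δ : h.ι.obj X ⟶ (h.ι.obj Y)⟦(1 : ℤ)⟧)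
  obtain ⟨E, ⟨e⟩⟩ := (h.essImage_iff V).2
    (heartProp_obj₂_of_distTriang _ hT (h.heartProp_obj Y) (h.heartProp_obj X))
  set i := h.ι.preimage (f ≫ e.inv)
  set p := h.ι.preimage (e.hom ≫ g)
  have hTE : Triangle.mk (h.ι.map i) (h.ι.map p) δ ∈ distTriang D :=
    isomorphic_distinguished _ hT _
      (Triangle.isoMk _ _ (Iso.refl (h.ι.obj Y)) e (Iso.refl (h.ι.obj X))
        (by change h.ι.map i ≫ e.hom = 𝟙 (h.ι.obj Y) ≫ f; simp [i])
        (by change h.ι.map p ≫ 𝟙 (h.ι.obj X) = e.hom ≫ g; simp [p])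
        (by change δ ≫ (𝟙 (h.ι.obj Y))⟦(1 : ℤ)⟧' = 𝟙 (h.ι.obj X) ≫ δ; simp))
  have w : i ≫ p = 0 := h.ι.map_injective (by
    rw [Functor.map_comp, Functor.map_zero]; exact comp_distTriang_mor_zero₁₂ _ hTE)
  refine ⟨⟨E, i, p, w, h.shortExact_of_distTriang i p hTE w⟩, ?_⟩
  exact h.distTriang_mor₃_unique (hθ.base_distTriang _) hTE

lemma exists_hom_of_base_comm (hθ : IsCanThetaFamily h θ) {X X' Y Y' : A}
    (s : SES A X Y) (s' : SES A X' Y') (a : Y ⟶ Y') (b : X ⟶ X')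
    (hsq : h.ι.map b ≫ θ 1 X' Y' (.base s') = θ 1 X Y (.base s) ≫ (h.ι.map a)⟦((1 : ℕ) : ℤ)⟧') :
    ∃ e : s.E ⟶ s'.E, s.i ≫ e = a ≫ s'.i ∧ s.p ≫ b = e ≫ s'.p := by
  obtain ⟨e, he₁, he₂⟩ : ∃ e : h.ι.obj s.E ⟶ h.ι.obj s'.E,
      h.ι.map s.i ≫ e = h.ι.map a ≫ h.ι.map s'.i ∧ h.ι.map s.p ≫ h.ι.map b = e ≫ h.ι.map s'.p :=
    complete_distinguished_triangle_morphism₂ _ _ (hθ.base_distTriang s) (hθ.base_distTriang s')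
      (h.ι.map a) (h.ι.map b) hsq.symm
  refine ⟨h.ι.preimage e, h.ι.map_injective ?_, h.ι.map_injective ?_⟩ <;> simpa

lemma base_naturality (hθ : IsCanThetaFamily h θ) {X X' Y Y' : A}
    (s : SES A X Y) (s' : SES A X' Y') (a : Y ⟶ Y') (b : X ⟶ X') (e : s.E ⟶ s'.E)
    (h₁ : s.i ≫ e = a ≫ s'.i) (h₂ : s.p ≫ b = e ≫ s'.p) :
    h.ι.map b ≫ θ 1 X' Y' (.base s') = θ 1 X Y (.base s) ≫ (h.ι.map a)⟦((1 : ℕ) : ℤ)⟧' := by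
  obtain ⟨c, hc₂, hc₃⟩ : ∃ c : h.ι.obj X ⟶ h.ι.obj X',
      h.ι.map s.p ≫ c = h.ι.map e ≫ h.ι.map s'.p ∧
      θ 1 X Y (.base s) ≫ (h.ι.map a)⟦(1 : ℤ)⟧' = c ≫ θ 1 X' Y' (.base s') :=
    complete_distinguished_triangle_morphism _ _ (hθ.base_distTriang s) (hθ.base_distTriang s')
      (h.ι.map a) (h.ι.map e)
      ((h.ι.map_comp _ _).symm.trans ((congrArg h.ι.map h₁).trans (h.ι.map_comp _ _)))
  have hc : c = h.ι.map b := h.eq_of_distTriang_mor₂_comp_eq (hθ.base_distTriang s) (by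
    rw [hc₂, ← Functor.map_comp, ← Functor.map_comp, h₂])
  rw [← hc]
  exact hc₃.symm

lemma naturality (hθ : IsCanThetaFamily h θ) {n : ℕ} {X X' Y Y' : A}
    {a : Y ⟶ Y'} {b : X ⟶ X'} {ξ : ExtSeq A n X Y} {ξ' : ExtSeq A n X' Y'}
    (hξ : ExtHom A a b ξ ξ') :
    h.ι.map b ≫ θ n X' Y' ξ' = θ n X Y ξ ≫ (h.ι.map a)⟦(n : ℤ)⟧' := by
  induction hξ with
  | base s s' e h₁ h₂ => exact hθ.base_naturality s s' _ _ e h₁ h₂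
  | @splice m _ _ Y Y' _ _ a _ c s s' _ _ e h₁ h₂ _ ih =>
    have hσ := (shiftFunctorAdd' D ((1 : ℕ) : ℤ) (m : ℤ) ((m + 1 : ℕ) : ℤ)
      (by push_cast; ring)).inv.naturality (h.ι.map a)
    rw [Functor.comp_map] at hσ
    rw [hθ.splice, hθ.splice, reassoc_of% ih, ← Functor.map_comp_assoc,
      hθ.base_naturality s s' a c e h₁ h₂, Functor.map_comp, assoc, assoc, assoc, hσ]

lemma exists_extHom_pushforward (hθ : IsCanThetaFamily h θ) {n : ℕ} {X Z Z₀ : A}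
    (ζ : ExtSeq A n X Z) (u : Z ⟶ Z₀) : ∃ ζ₀ : ExtSeq A n X Z₀, ExtHom A u (𝟙 X) ζ ζ₀ := by
  -- The pushout of the leading short exact sequence along `u` comes from surjectivity of `θ¹`.
  cases ζ with
  | base s =>
    obtain ⟨s₀, hs₀⟩ := hθ.exists_base_eq (θ 1 _ _ (.base s) ≫ (h.ι.map u)⟦((1 : ℕ) : ℤ)⟧')
    obtain ⟨e, he₁, he₂⟩ := hθ.exists_hom_of_base_comm s s₀ u (𝟙 X) (by simp [hs₀])
    exact ⟨.base s₀, .base s s₀ e he₁ he₂⟩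
  | splice s ρ =>
    obtain ⟨s₀, hs₀⟩ := hθ.exists_base_eq (θ 1 _ _ (.base s) ≫ (h.ι.map u)⟦((1 : ℕ) : ℤ)⟧')
    obtain ⟨e, he₁, he₂⟩ := hθ.exists_hom_of_base_comm s s₀ u (𝟙 _) (by simp [hs₀])
    exact ⟨.splice s₀ ρ, .splice (𝟙 _) s s₀ ρ ρ e he₁ he₂ (ExtHom.refl ρ)⟩

lemma exists_yext_mk_splice_eq (hθ : IsCanThetaFamily h θ) {n : ℕ} {X Y Z Z₀ : A}
    (s : SES A Z Y) (s₀ : SES A Z₀ Y) (u : Z ⟶ Z₀)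
    (hu : h.ι.map u ≫ θ 1 Z₀ Y (.base s₀) = θ 1 Z Y (.base s)) (ζ : ExtSeq A n X Z) :
    ∃ ζ₀ : ExtSeq A n X Z₀, θ n X Z₀ ζ₀ = θ n X Z ζ ≫ (h.ι.map u)⟦(n : ℤ)⟧' ∧
      Yext.mk A (.splice s ζ) = Yext.mk A (.splice s₀ ζ₀) := by
  obtain ⟨ζ₀, hζ₀⟩ := hθ.exists_extHom_pushforward ζ u
  obtain ⟨e, he₁, he₂⟩ := hθ.exists_hom_of_base_comm s s₀ (𝟙 Y) u (by simp [hu])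
  exact ⟨ζ₀, by simpa using hθ.naturality hζ₀, Quot.sound (.splice u s s₀ ζ ζ₀ e he₁ he₂ hζ₀)⟩

lemma exists_eq_of_surjective (hθ : IsCanThetaFamily h θ) {n : ℕ} {X Y : A}
    (hsurj : Function.Surjective (thetaBar θ hθ n X Y)) (f : h.ι.obj X ⟶ (h.ι.obj Y)⟦(n : ℤ)⟧) :
    ∃ ξ : ExtSeq A n X Y, θ n X Y ξ = f := by
  obtain ⟨⟨ξ⟩, hξ⟩ := hsurj f
  exact ⟨ξ, hξ⟩

lemma yext_mk_splice_eq_of_sub_comp_eq_zero (hθ : IsCanThetaFamily h θ) {n : ℕ}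
    (hbij : ∀ X Y : A, Function.Bijective (thetaBar θ hθ n X Y)) {X Y W : A} (s₀ : SES A W Y)
    (μ μ' : ExtSeq A n X W)
    (hμ : (θ n X W μ - θ n X W μ') ≫ (θ 1 W Y (.base s₀))⟦(n : ℤ)⟧' = 0) :
    Yext.mk A (.splice s₀ μ) = Yext.mk A (.splice s₀ μ') := by
  obtain ⟨w, hw⟩ : ∃ w : h.ι.obj X ⟶ (h.ι.obj s₀.E)⟦(n : ℤ)⟧,
      θ n X W μ - θ n X W μ' = w ≫ (h.ι.map s₀.p)⟦(n : ℤ)⟧' :=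
    coyoneda_exact₃_shift _ (hθ.base_distTriang s₀) n _ hμ
  obtain ⟨ν, hν⟩ := hθ.exists_eq_of_surjective (hbij X s₀.E).2 w
  obtain ⟨κ, hκ⟩ := hθ.exists_eq_of_surjective (hbij X (W ⊞ s₀.E)).2
    (θ n X W μ' ≫ (h.ι.map biprod.inl)⟦(n : ℤ)⟧' + θ n X s₀.E ν ≫ (h.ι.map biprod.inr)⟦(n : ℤ)⟧')
  -- `κ` pushes forward to `μ` along `desc 𝟙 p` and to `μ'` along `fst`; since `p ≫ θ¹ s₀ = 0`,
  -- these two maps pull `s₀` back to the same `s₁`.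
  obtain ⟨s₁, hs₁⟩ := hθ.exists_base_eq (h.ι.map biprod.fst ≫ θ 1 W Y (.base s₀))
  have hp : h.ι.map s₀.p ≫ θ 1 W Y (.base s₀) = 0 :=
    comp_distTriang_mor_zero₂₃ _ (hθ.base_distTriang s₀)
  obtain ⟨κr, hκrθ, hκr⟩ := hθ.exists_yext_mk_splice_eq s₁ s₀ (biprod.desc (𝟙 W) s₀.p) (by
    rw [hs₁, show biprod.desc (𝟙 W) s₀.p = biprod.fst + biprod.snd ≫ s₀.p by ext <;> simp]
    simp [Preadditive.add_comp, hp]) κ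
  obtain ⟨κf, hκfθ, hκf⟩ := hθ.exists_yext_mk_splice_eq s₁ s₀ biprod.fst hs₁.symm κ
  have hμκ : Yext.mk A μ = Yext.mk A κr := (hbij X W).1 (by
    change θ n X W μ = θ n X W κr
    rw [hκrθ, hκ]
    simp [← Functor.map_comp, hν, ← hw])
  have hμ'κ : Yext.mk A μ' = Yext.mk A κf := (hbij X W).1 (by
    change θ n X W μ' = θ n X W κf
    rw [hκfθ, hκ]
    simp [← Functor.map_comp])
  rw [Yext.mk_splice_congr s₀ hμκ, Yext.mk_splice_congr s₀ hμ'κ, ← hκr, hκf]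

end IsCanThetaFamily

/-- If the canonical maps `θ^n` are bijective for all objects of the heart,
then the canonical maps `θ^{n+1}` are injective. -/
theorem statement_5 {A : Type*} [Category A] [Abelian A]
    {D : Type*} [Category D] [HasZeroObject D] [Preadditive D] [HasShift D ℤ]
    [∀ n : ℤ, (shiftFunctor D n).Additive] [Pretriangulated D]
    {t : TStructure D} (h : HeartData A D t)
    (θ : ∀ (n : ℕ) (X Y : A), ExtSeq A n X Y → (h.ι.obj X ⟶ (h.ι.obj Y)⟦(n : ℤ)⟧))
    (hθ : IsCanThetaFamily h θ) (n : ℕ) (hn : 2 ≤ n)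
    (hyp : ∀ X Y : A, Function.Bijective (thetaBar θ hθ n X Y)) (X Y : A) :
    Function.Injective (thetaBar θ hθ (n + 1) X Y) := by
  rintro ⟨ξ⟩ ⟨ξ'⟩ hξξ'
  obtain ⟨Z, s, ζ, rfl⟩ := ξ.exists_eq_splice (by omega)
  obtain ⟨Z', s', ζ', rfl⟩ := ξ'.exists_eq_splice (by omega)
  have key : θ n X Z ζ ≫ (θ 1 Z Y (.base s))⟦(n : ℤ)⟧' =
      θ n X Z' ζ' ≫ (θ 1 Z' Y (.base s'))⟦(n : ℤ)⟧' := by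
    change θ (n + 1) X Y _ = θ (n + 1) X Y _ at hξξ'
    rwa [hθ.splice, hθ.splice, ← assoc, ← assoc, cancel_mono] at hξξ'
  obtain ⟨s₀, hs₀⟩ := hθ.exists_base_eq
    (h.ι.map biprod.fst ≫ θ 1 Z Y (.base s) - h.ι.map biprod.snd ≫ θ 1 Z' Y (.base s'))
  have hinl : h.ι.map biprod.inl ≫ θ 1 (Z ⊞ Z') Y (.base s₀) = θ 1 Z Y (.base s) := by
    simp [hs₀, ← Functor.map_comp_assoc]
  have hinr : h.ι.map (-biprod.inr) ≫ θ 1 (Z ⊞ Z') Y (.base s₀) = θ 1 Z' Y (.base s') := by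
    simp [hs₀, ← Functor.map_comp_assoc]
  obtain ⟨μ, hμθ, hμ⟩ := hθ.exists_yext_mk_splice_eq s s₀ biprod.inl hinl ζ
  obtain ⟨μ', hμ'θ, hμ'⟩ := hθ.exists_yext_mk_splice_eq s' s₀ (-biprod.inr) hinr ζ'
  change Yext.mk A _ = Yext.mk A _
  rw [hμ, hμ']
  refine hθ.yext_mk_splice_eq_of_sub_comp_eq_zero hyp s₀ μ μ' ?_
  rw [Preadditive.sub_comp, hμθ, hμ'θ, assoc, assoc, ← Functor.map_comp, ← Functor.map_comp,
    hinl, hinr, key, sub_self]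

end HRS
end

section
/- Let (F, ω) : D → D' be a t-exact triangle functor between triangulated categories with bounded t-structures with hearts A and A'. Then for all X, Y ∈ A and n ≥ 1, the canonical maps are compatible with F: θ'^n(F|_A(ξ)) = ω^n_Y ∘ F(θ^n(ξ)) for every Yoneda extension class [ξ] ∈ Yext^n_A(X, Y), where ω^n : FΣ^n → Σ'^n F is induced by ω. -/
/-!
For objects `X`, `Y` of a heart, `Hom(Y⟦1⟧, X) = 0`, so a distinguished triangle
`Y ⟶ E ⟶ X ⟶ Y⟦1⟧` with fixed first two maps has a unique third map. Applying the
triangulated functor `F` to the triangle of a short exact sequence `s` and transporting along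
`e` gives a distinguished triangle on `F₀ s`, which yields the case `n = 1`. For a splice,
`θ^{n+1}` is the composition of shifted morphisms `θ^n ξ` and `θ^1 s`, and the action of `F`
on shifted morphisms (`ShiftedHom.map`) respects that composition, so the general case
follows by induction.
-/

open CategoryTheory Category Limits Pretriangulated Triangulated ZeroObject

namespace HRS

variable (A : Type*) [Category A] [Abelian A]

variable (D : Type*) [Category D] [HasZeroObject D] [Preadditive D] [HasShift D ℤ]
  [∀ n : ℤ, (shiftFunctor D n).Additive] [Pretriangulated D]

variable {A D}

variable (A D)

variable {A D}

section

variable {C : Type*} [Category C] {M : Type*} [AddMonoid M] [HasShift C M]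

lemma _root_.CategoryTheory.ShiftedHom.comp_conj {X X' Y Y' Z Z' : C} (a : X' ⟶ X)
    (b : Y ≅ Y') (c : Z ⟶ Z') {m n k : M} (f : ShiftedHom X Y m) (g : ShiftedHom Y Z n)
    (h : n + m = k) :
    ShiftedHom.comp (a ≫ f ≫ b.hom⟦m⟧') (b.inv ≫ g ≫ c⟦n⟧') h =
      a ≫ f.comp g h ≫ c⟦k⟧' := by
  simp only [ShiftedHom.comp, Functor.map_comp, assoc]
  rw [← Functor.map_comp_assoc (shiftFunctor C m) b.hom, b.hom_inv_id,
    CategoryTheory.Functor.map_id, id_comp]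
  have hnat := (shiftFunctorAdd' C n m k h).inv.naturality c
  dsimp at hnat
  rw [hnat]

end

section

variable {C : Type*} [Category C] [Preadditive C] [HasZeroObject C] [HasShift C ℤ]
  [∀ n : ℤ, (shiftFunctor C n).Additive] [Pretriangulated C]

lemma _root_.CategoryTheory.Triangulated.TStructure.hom_shift_one_eq_zero (t : TStructure C)
    {Y X : C} (hY : t.le 0 Y) (hX : t.ge 0 X) (f : Y⟦(1 : ℤ)⟧ ⟶ X) : f = 0 := by
  have : t.IsLE Y 0 := ⟨hY⟩
  have : t.IsGE X 0 := ⟨hX⟩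
  have := t.isLE_shift Y 0 1 (-1)
  exact t.zero f (-1) 0

/-- The completing morphism `c` in a morphism of triangles `(𝟙, 𝟙, c)` satisfies
`g ≫ (c - 𝟙) = 0`, so `c - 𝟙` factors through `δ` via a map `Y⟦1⟧ ⟶ X`, which is zero. -/
lemma mor₃_eq_of_distinguished {Y E X : C} {f : Y ⟶ E} {g : E ⟶ X} {δ δ' : X ⟶ Y⟦(1 : ℤ)⟧}
    (hzero : ∀ w : Y⟦(1 : ℤ)⟧ ⟶ X, w = 0)
    (h : Triangle.mk f g δ ∈ distTriang C) (h' : Triangle.mk f g δ' ∈ distTriang C) :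
    δ = δ' := by
  obtain ⟨c, hgc, hδc⟩ : ∃ c : X ⟶ X, g ≫ c = 𝟙 E ≫ g ∧ δ ≫ (𝟙 Y)⟦(1 : ℤ)⟧' = c ≫ δ' :=
    complete_distinguished_triangle_morphism _ _ h h' (𝟙 Y) (𝟙 E)
      ((comp_id f).trans (id_comp f).symm)
  rw [id_comp] at hgc
  rw [CategoryTheory.Functor.map_id, comp_id] at hδc
  have hg : g ≫ (c - 𝟙 X) = 0 := by rw [Preadditive.comp_sub, hgc, comp_id, sub_self]
  obtain ⟨w, hw⟩ : ∃ w : Y⟦(1 : ℤ)⟧ ⟶ X, c - 𝟙 X = δ ≫ w := Triangle.yoneda_exact₃ _ h _ hg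
  have hc : c = 𝟙 X := sub_eq_zero.1 (by rw [hw, hzero w, comp_zero])
  rw [hδc, hc, id_comp]

end

section

variable {A A' : Type*} [Category A] [Abelian A] [Category A'] [Abelian A']
  {D : Type*} [Category D] [HasZeroObject D] [Preadditive D] [HasShift D ℤ]
  [∀ n : ℤ, (shiftFunctor D n).Additive] [Pretriangulated D]
  {D' : Type*} [Category D'] [HasZeroObject D'] [Preadditive D'] [HasShift D' ℤ]
  [∀ n : ℤ, (shiftFunctor D' n).Additive] [Pretriangulated D']
  {t : TStructure D} {t' : TStructure D'} {hA : HeartData A D t} {hA' : HeartData A' D' t'}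
  (F : D ⥤ D') [F.CommShift ℤ] [F.IsTriangulated]
  {F₀ : A ⥤ A'} [F₀.Additive] (e : hA.ι ⋙ F ≅ F₀ ⋙ hA'.ι)
  {θ : ∀ (n : ℕ) (X Y : A), ExtSeq A n X Y → (hA.ι.obj X ⟶ (hA.ι.obj Y)⟦(n : ℤ)⟧)}
  {θ' : ∀ (n : ℕ) (X Y : A'), ExtSeq A' n X Y → (hA'.ι.obj X ⟶ (hA'.ι.obj Y)⟦(n : ℤ)⟧)}
  (hF₀ex : ∀ S : ShortComplex A, S.ShortExact → (S.map F₀).ShortExact)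

lemma HeartData.heartProp_obj_s9 (h : HeartData A D t) (X : A) : heartProp D t (h.ι.obj X) :=
  (h.essImage_iff _).1 (h.ι.obj_mem_essImage X)

lemma IsCanThetaFamily.theta_splice (hθ : IsCanThetaFamily hA θ) {n : ℕ} {X Y Z : A}
    (s : SES A Z Y) (ξ : ExtSeq A n X Z) :
    θ (n + 1) X Y (.splice s ξ) =
      ShiftedHom.comp (θ n X Z ξ) (θ 1 Z Y (.base s)) (by push_cast; ring) :=
  hθ.splice s ξ

lemma IsCanThetaFamily.theta_one_mapSES (hθ : IsCanThetaFamily hA θ)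
    (hθ' : IsCanThetaFamily hA' θ') {X Y : A} (s : SES A X Y) :
    θ' 1 (F₀.obj X) (F₀.obj Y) (.base (mapSES A' F₀ hF₀ex s)) =
      e.inv.app X ≫ ShiftedHom.map (θ 1 X Y (.base s)) F ≫ (e.hom.app Y)⟦((1 : ℕ) : ℤ)⟧' := by
  -- `hθ.base` shifts by `(1 : ℤ)`, whereas `θ 1` lands in the shift by `((1 : ℕ) : ℤ)`.
  set δ : hA.ι.obj X ⟶ (hA.ι.obj Y)⟦(1 : ℤ)⟧ := θ 1 X Y (.base s) ≫ eqToHom (by norm_num)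
  have hδ : (e.inv.app X ≫ ShiftedHom.map δ F ≫ (e.hom.app Y)⟦(1 : ℤ)⟧') ≫
      (e.inv.app Y)⟦(1 : ℤ)⟧' = e.inv.app X ≫ ShiftedHom.map δ F := by
    rw [assoc, assoc, ← Functor.map_comp, Iso.hom_inv_id_app]
    simp
  have hFT : Triangle.mk (hA'.ι.map (mapSES A' F₀ hF₀ex s).i)
      (hA'.ι.map (mapSES A' F₀ hF₀ex s).p)
      (e.inv.app X ≫ ShiftedHom.map δ F ≫ (e.hom.app Y)⟦(1 : ℤ)⟧') ∈ distTriang D' :=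
    isomorphic_distinguished _ (F.map_distinguished _ (hθ.base s)) _
      (Triangle.isoMk _ _ (e.app Y).symm (e.app s.E).symm (e.app X).symm
        (e.inv.naturality s.i) (e.inv.naturality s.p) hδ)
  have hY := hA'.heartProp_obj_s9 (F₀.obj Y)
  have hX := hA'.heartProp_obj_s9 (F₀.obj X)
  have key := mor₃_eq_of_distinguished (t'.hom_shift_one_eq_zero hY.1 hX.2)
    (hθ'.base (mapSES A' F₀ hF₀ex s)) hFT
  simpa [ShiftedHom.map, δ] using key

end

/-- Compatibility of the canonical maps with a t-exact triangle functor: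
`θ'^n(F|_A(ξ)) = ω^n_Y ∘ F(θ^n(ξ))` (up to the identification of `F|_A` with `F` on
the hearts). -/
theorem statement_9 {A A' : Type*} [Category A] [Abelian A] [Category A'] [Abelian A']
    {D : Type*} [Category D] [HasZeroObject D] [Preadditive D] [HasShift D ℤ]
    [∀ n : ℤ, (shiftFunctor D n).Additive] [Pretriangulated D]
    {D' : Type*} [Category D'] [HasZeroObject D'] [Preadditive D'] [HasShift D' ℤ]
    [∀ n : ℤ, (shiftFunctor D' n).Additive] [Pretriangulated D']
    (t : TStructure D) (t' : TStructure D')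
    (hb : IsBoundedTStructure D t) (hb' : IsBoundedTStructure D' t')
    (hA : HeartData A D t) (hA' : HeartData A' D' t')
    (F : D ⥤ D') [F.CommShift ℤ] [F.IsTriangulated]
    (F₀ : A ⥤ A') [F₀.Additive] (e : hA.ι ⋙ F ≅ F₀ ⋙ hA'.ι)
    (θ : ∀ (n : ℕ) (X Y : A), ExtSeq A n X Y → (hA.ι.obj X ⟶ (hA.ι.obj Y)⟦(n : ℤ)⟧))
    (hθ : IsCanThetaFamily hA θ)
    (θ' : ∀ (n : ℕ) (X Y : A'), ExtSeq A' n X Y → (hA'.ι.obj X ⟶ (hA'.ι.obj Y)⟦(n : ℤ)⟧))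
    (hθ' : IsCanThetaFamily hA' θ')
    (hF₀ex : ∀ S : ShortComplex A, S.ShortExact → (S.map F₀).ShortExact) :
    ∀ (n : ℕ), 1 ≤ n → ∀ (X Y : A) (ξ : ExtSeq A n X Y),
      θ' n (F₀.obj X) (F₀.obj Y) (mapExtSeq A' F₀ hF₀ex ξ) =
        e.inv.app X ≫ F.map (θ n X Y ξ) ≫ (F.commShiftIso (n : ℤ)).hom.app (hA.ι.obj Y) ≫
          (e.hom.app Y)⟦(n : ℤ)⟧' := by
  rintro n - X Y ξ
  suffices θ' n _ _ (mapExtSeq A' F₀ hF₀ex ξ) =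
      e.inv.app X ≫ ShiftedHom.map (θ n X Y ξ) F ≫ (e.hom.app Y)⟦(n : ℤ)⟧' by
    simpa only [ShiftedHom.map, assoc] using this
  induction ξ with
  | base s => exact hθ.theta_one_mapSES F e hF₀ex hθ' s
  | splice s ξ ih =>
    rw [mapExtSeq, hθ'.theta_splice, hθ.theta_splice, ShiftedHom.map_comp, ih,
      hθ.theta_one_mapSES F e hF₀ex hθ' s]
    exact ShiftedHom.comp_conj _ (e.app _) _ _ _ _

end HRS
end

section
/- Let A and A' be abelian categories with torsion pairs (T, F) and (T', F') respectively, and let G : A' → A be an additive functor such that: (1) G is exact with G(T') ⊆ T and G(F') ⊆ F; (2) the restrictions G|_{T'} and G|_{F'} are fully faithful; (3) for all F' ∈ F', T' ∈ T', G induces a surjection Hom_{A'}(F', T') → Hom_A(G F', G T') and an injection Yext^1_{A'}(F', T') → Yext^1_A(G F', G T'). Then G is fully faithful. -/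
/-!
Exactness reduces faithfulness to `G` reflecting zero objects, which holds because every object
is an extension of a torsion-free object by a torsion one and `G` is faithful on both classes.

For fullness, write `0 → tX → X → fX → 0` and `0 → tY → Y → fY → 0` for the torsion sequences.
Since `Hom(T, F) = 0`, a map `u : G X ⟶ G Y` induces maps `G tX ⟶ G tY` and `G fX ⟶ G fY`, of the
form `G vt` and `G vf`. Then `u` is a morphism of extensions over `(G vt, G vf)`, so the images
under `G` of the pushout `vt_* [X]` and the pullback `vf^* [Y]` are equivalent; by injectivity on
`Yext¹` these extensions are already equivalent in `A'`, which gives `w : X ⟶ Y` over `(vt, vf)`.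
Finally `u - G w` factors as `G fX ⟶ G tY` between the two sequences, and that map lifts to `A'`.
-/

open CategoryTheory Category Limits Pretriangulated Triangulated ZeroObject

namespace HRS

variable (A : Type*) [Category A] [Abelian A]

variable (D : Type*) [Category D] [HasZeroObject D] [Preadditive D] [HasShift D ℤ]
  [∀ n : ℤ, (shiftFunctor D n).Additive] [Pretriangulated D]

variable {A D}

variable (A D)

variable {A D}

namespace SES

variable {X X' Y Y' : A}

-- Reducible, so that Mathlib's `pushout` and `pullback` lemmas apply to the fields directly.
noncomputable abbrev pushout (s : SES A X Y) (a : Y ⟶ Y') : SES A X Y' where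
  E := Limits.pushout s.i a
  i := pushout.inr s.i a
  p := pushout.desc s.p 0 (by simp [s.w])
  w := pushout.inr_desc _ _ _
  ex := by
    have := s.ex.mono_f
    have := s.ex.epi_g
    refine .mk' ?_ inferInstance (epi_of_epi_fac (pushout.inl_desc _ _ _))
    rw [ShortComplex.exact_iff_exact_up_to_refinements]
    intro T x hx
    dsimp at x hx ⊢
    obtain ⟨T', π, _, xE, xY, hπ⟩ :=
      (IsPushout.of_hasPushout s.i a).hom_eq_add_up_to_refinements x
    have hxE : xE ≫ s.p = 0 := by
      simpa [reassoc_of% hπ, pushout.inl_desc, pushout.inr_desc] using π ≫= hx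
    obtain ⟨T'', π', _, y, hy⟩ := s.ex.exact.exact_up_to_refinements xE hxE
    refine ⟨T'', π' ≫ π, inferInstance, y ≫ a + π' ≫ xY, ?_⟩
    dsimp at hy
    simp only [Category.assoc, hπ, Preadditive.comp_add, Preadditive.add_comp,
      ← pushout.condition, reassoc_of% hy]

noncomputable abbrev pullback (s : SES A X Y) (b : X' ⟶ X) : SES A X' Y where
  E := Limits.pullback s.p b
  i := pullback.lift s.i 0 (by simp [s.w])
  p := pullback.snd s.p b
  w := pullback.lift_snd _ _ _
  ex := by
    have := s.ex.mono_f
    have := s.ex.epi_g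
    refine .mk' ?_ (mono_of_mono_fac (pullback.lift_fst _ _ _)) inferInstance
    rw [ShortComplex.exact_iff_exact_up_to_refinements]
    intro T x hx
    dsimp at x hx ⊢
    have hx' : (x ≫ pullback.fst s.p b) ≫ s.p = 0 := by
      rw [Category.assoc, pullback.condition, reassoc_of% hx, zero_comp]
    obtain ⟨T', π, _, y, hy⟩ := s.ex.exact.exact_up_to_refinements _ hx'
    refine ⟨T', π, inferInstance, y, pullback.hom_ext ?_ ?_⟩
    · simpa [pullback.lift_fst] using hy
    · simp [pullback.lift_snd, hx]

def Equivalent (s s' : SES A X Y) : Prop :=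
  ∃ e : s.E ⟶ s'.E, s.i ≫ e = s'.i ∧ e ≫ s'.p = s.p

theorem Equivalent.refl (s : SES A X Y) : s.Equivalent s := ⟨𝟙 _, by simp, by simp⟩

theorem Equivalent.trans {s s' s'' : SES A X Y} :
    s.Equivalent s' → s'.Equivalent s'' → s.Equivalent s''
  | ⟨e, he₁, he₂⟩, ⟨e', he₁', he₂'⟩ =>
    ⟨e ≫ e', by simp [reassoc_of% he₁, he₁'], by simp [he₂', he₂]⟩

-- The five lemma makes the middle map of an equivalence invertible.
theorem Equivalent.symm {s s' : SES A X Y} : s.Equivalent s' → s'.Equivalent s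
  | ⟨e, he₁, he₂⟩ => by
    let φ : ShortComplex.mk s.i s.p s.w ⟶ ShortComplex.mk s'.i s'.p s'.w :=
      ⟨𝟙 _, e, 𝟙 _, by simp [he₁], by simp [he₂]⟩
    have : IsIso e := ShortComplex.isIso₂_of_shortExact_of_isIso₁₃ φ s.ex s'.ex
    exact ⟨inv e, by simp [← he₁], by simp [← he₂]⟩

end SES

def ExtSeq.toSES {X Y : A} : ExtSeq A 1 X Y → SES A X Y
  | .base s => s

theorem SES.equivalent_of_extEquiv {X Y : A} {s s' : SES A X Y}
    (h : ExtEquiv A (.base s) (.base s')) : s.Equivalent s' := by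
  suffices ∀ ξ ξ' : ExtSeq A 1 X Y, ExtEquiv A ξ ξ' → ξ.toSES.Equivalent ξ'.toSES from
    this _ _ h
  intro ξ ξ' h
  induction h with
  | rel _ _ h =>
    cases h with
    | base s s' e h₁ h₂ =>
      exact ⟨e, by simpa [ExtSeq.toSES] using h₁, by simpa [ExtSeq.toSES] using h₂.symm⟩
    | splice _ _ _ ζ => exact nomatch ζ
  | refl => exact .refl _
  | symm _ _ _ ih => exact ih.symm
  | trans _ _ _ _ _ ih ih' => exact ih.trans ih'

theorem SES.extHom_of_isPushout_of_isPullback {X X' Y Y' : A} {s : SES A X Y}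
    {s' : SES A X' Y'} {a : Y ⟶ Y'} {b : X ⟶ X'} {e : s.E ⟶ s'.E}
    (he₁ : s.i ≫ e = a ≫ s'.i) (he₂ : s.p ≫ b = e ≫ s'.p) {P Q : SES A X Y'}
    {j : s.E ⟶ P.E} {q : Q.E ⟶ s'.E} (hj : IsPushout s.i a j P.i) (hjp : j ≫ P.p = s.p)
    (hq : IsPullback q Q.p s'.p b) (hqi : Q.i ≫ q = s'.i) :
    ExtHom A (𝟙 Y') (𝟙 X) (.base P) (.base Q) := by
  let m : P.E ⟶ s'.E := hj.desc e s'.i he₁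
  have hm : m ≫ s'.p = P.p ≫ b :=
    hj.hom_ext (by simp [m, ← he₂, reassoc_of% hjp]) (by simp [m, s'.w, reassoc_of% P.w])
  refine .base P Q (hq.lift m P.p hm) (hq.hom_ext ?_ ?_) (by simp)
  · simp [m, hqi]
  · simp [P.w, Q.w]

theorem SES.exists_hom_of_extEquiv_pushout_pullback {X X' Y Y' : A} (s : SES A X Y)
    (s' : SES A X' Y') {a : Y ⟶ Y'} {b : X ⟶ X'}
    (h : ExtEquiv A (.base (s.pushout a)) (.base (s'.pullback b))) :
    ∃ w : s.E ⟶ s'.E, s.i ≫ w = a ≫ s'.i ∧ w ≫ s'.p = s.p ≫ b := by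
  obtain ⟨k, hk₁, hk₂⟩ := equivalent_of_extEquiv h
  refine ⟨pushout.inl s.i a ≫ k ≫ pullback.fst s'.p b, ?_, ?_⟩
  · rw [pushout.condition_assoc, reassoc_of% hk₁, pullback.lift_fst]
  · rw [Category.assoc, Category.assoc, pullback.condition, reassoc_of% hk₂,
      pushout.inl_desc_assoc]

theorem _root_.CategoryTheory.ShortComplex.ShortExact.exists_eq_g_comp_comp_f
    {S₁ S₂ : ShortComplex A} (h₁ : S₁.ShortExact) (h₂ : S₂.ShortExact) {φ : S₁.X₂ ⟶ S₂.X₂}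
    (hf : S₁.f ≫ φ = 0) (hg : φ ≫ S₂.g = 0) : ∃ d : S₁.X₃ ⟶ S₂.X₁, φ = S₁.g ≫ d ≫ S₂.f := by
  have := h₁.epi_g
  have := h₂.mono_f
  have hd : h₁.exact.desc φ hf ≫ S₂.g = 0 := by
    rw [← cancel_epi S₁.g, h₁.exact.g_desc_assoc, hg, comp_zero]
  exact ⟨h₂.exact.lift _ hd, by rw [h₂.exact.lift_f, h₁.exact.g_desc]⟩

theorem isZero_of_injective_map {B C : Type*} [Category B] [Category C] [HasZeroMorphisms B]
    [HasZeroMorphisms C] (G : B ⥤ C) {X : B}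
    (hX : Function.Injective (fun g : X ⟶ X => G.map g)) (h : IsZero (G.obj X)) : IsZero X :=
  (IsZero.iff_id_eq_zero _).2 (hX (h.eq_of_src (G.map (𝟙 X)) (G.map 0)))

section Functor

variable {A' : Type*} [Category A'] [Abelian A'] (G : A' ⥤ A)

theorem faithful_of_reflects_isZero [G.Additive] [G.PreservesMonomorphisms]
    [G.PreservesEpimorphisms] (hG : ∀ X : A', IsZero (G.obj X) → IsZero X) : G.Faithful := by
  refine ⟨fun {X Y} g g' hgg => sub_eq_zero.1 ?_⟩
  have h0 :
      G.map (Abelian.factorThruImage (g - g')) ≫ G.map (Abelian.image.ι (g - g')) = 0 := by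
    rw [← G.map_comp, Abelian.image.fac, G.map_sub, hgg, sub_self]
  have : Mono (0 : G.obj (Abelian.image (g - g')) ⟶ G.obj Y) := by
    rw [← zero_of_epi_comp _ h0]
    infer_instance
  have hI : IsZero (Abelian.image (g - g')) := hG _ (IsZero.of_mono_zero _ (G.obj Y))
  rw [← Abelian.image.fac (g - g'), hI.eq_of_src (Abelian.image.ι _) 0, comp_zero]

theorem isZero_of_isZero_map [G.PreservesMonomorphisms] [G.PreservesEpimorphisms]
    {T' F' : A' → Prop} (tp' : TorsionPair A' T' F')
    (hT' : ∀ x, T' x → Function.Injective (fun g : x ⟶ x => G.map g))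
    (hF' : ∀ x, F' x → Function.Injective (fun g : x ⟶ x => G.map g))
    {X : A'} (hX : IsZero (G.obj X)) : IsZero X := by
  obtain ⟨t, f, i, p, w, ht, hf, hS⟩ := tp'.exists_ses X
  have := hS.mono_f
  have := hS.epi_g
  have ht0 : IsZero t := isZero_of_injective_map G (hT' t ht) (hX.of_mono (G.map i))
  have hf0 : IsZero f := isZero_of_injective_map G (hF' f hf) (hX.of_epi (G.map p))
  have : IsIso p := hS.isIso_g_iff.2 ht0
  exact hf0.of_iso (asIso p)

variable [G.Additive] (hex : ∀ S : ShortComplex A', S.ShortExact → (S.map G).ShortExact)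
include hex

theorem extHom_map_pushout_map_pullback {X X' Y Y' : A'} (s : SES A' X Y)
    (s' : SES A' X' Y') (a : Y ⟶ Y') (b : X ⟶ X') (u : G.obj s.E ⟶ G.obj s'.E)
    (hu₁ : G.map s.i ≫ u = G.map a ≫ G.map s'.i) (hu₂ : G.map s.p ≫ G.map b = u ≫ G.map s'.p) :
    ExtHom A (𝟙 (G.obj Y')) (𝟙 (G.obj X)) (.base (mapSES A G hex (s.pushout a)))
      (.base (mapSES A G hex (s'.pullback b))) := by
  obtain ⟨_, _⟩ := (G.exact_tfae.out 0 3).1 hex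
  exact SES.extHom_of_isPushout_of_isPullback (s := mapSES A G hex s)
    (s' := mapSES A G hex s') hu₁ hu₂ ((IsPushout.of_hasPushout s.i a).map G)
    (by simp only [mapSES, ← G.map_comp, pushout.inl_desc])
    ((IsPullback.of_hasPullback s'.p b).map G)
    (by simp only [mapSES, ← G.map_comp, pullback.lift_fst])

theorem full_of_torsionPair {T F : A → Prop} {T' F' : A' → Prop} (tp : TorsionPair A T F)
    (tp' : TorsionPair A' T' F') (hT : ∀ x : A', T' x → T (G.obj x))
    (hF : ∀ x : A', F' x → F (G.obj x))
    (hfullT : ∀ x y : A', T' x → T' y → Function.Surjective (fun g : x ⟶ y => G.map g))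
    (hfullF : ∀ x y : A', F' x → F' y → Function.Surjective (fun g : x ⟶ y => G.map g))
    (hsurj : ∀ f t : A', F' f → T' t → Function.Surjective (fun g : f ⟶ t => G.map g))
    (hinj : ∀ f t : A', F' f → T' t → ∀ s s' : SES A' f t,
      ExtEquiv A (.base (mapSES A G hex s)) (.base (mapSES A G hex s')) →
        ExtEquiv A' (.base s) (.base s')) :
    G.Full := by
  refine ⟨fun {X Y} u => ?_⟩
  obtain ⟨tX, fX, iX, pX, wX, hTX, hFX, exX⟩ := tp'.exists_ses X
  obtain ⟨tY, fY, iY, pY, wY, hTY, hFY, exY⟩ := tp'.exists_ses Y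
  have hGX := hex _ exX
  have hGY := hex _ exY
  have := hGX.epi_g
  have := hGY.mono_f
  have hu : G.map iX ≫ u ≫ G.map pY = 0 := tp.hom_zero (hT _ hTX) (hF _ hFY) _
  obtain ⟨vt, hvt⟩ :=
    hfullT _ _ hTX hTY (hGY.exact.lift (G.map iX ≫ u) ((Category.assoc _ _ _).trans hu))
  obtain ⟨vf, hvf⟩ := hfullF _ _ hFX hFY (hGX.exact.desc (u ≫ G.map pY) hu)
  have hut : G.map iX ≫ u = G.map vt ≫ G.map iY := by
    rw [show G.map vt = _ from hvt]
    exact (hGY.exact.lift_f _ _).symm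
  have huf : G.map pX ≫ G.map vf = u ≫ G.map pY := by
    rw [show G.map vf = _ from hvf]
    exact hGX.exact.g_desc _ _
  let sX : SES A' fX tX := ⟨X, iX, pX, wX, exX⟩
  let sY : SES A' fY tY := ⟨Y, iY, pY, wY, exY⟩
  -- `u` is a morphism of extensions over `(G vt, G vf)`; injectivity on `Yext¹` brings the
  -- resulting equivalence of `vt_* sX` and `vf^* sY` back to `A'`.
  obtain ⟨w, hw₁, hw₂⟩ : ∃ w : X ⟶ Y, iX ≫ w = vt ≫ iY ∧ w ≫ pY = pX ≫ vf :=
    sX.exists_hom_of_extEquiv_pushout_pullback sY (hinj _ _ hFX hTY _ _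
      (.rel _ _ (extHom_map_pushout_map_pullback G hex sX sY vt vf u hut huf)))
  have hwt : G.map iX ≫ (u - G.map w) = 0 := by
    rw [Preadditive.comp_sub, hut, ← G.map_comp, ← G.map_comp, hw₁, sub_self]
  have hwf : (u - G.map w) ≫ G.map pY = 0 := by
    rw [Preadditive.sub_comp, ← huf, ← G.map_comp, ← G.map_comp, hw₂, sub_self]
  obtain ⟨d, hd⟩ := hGX.exists_eq_g_comp_comp_f hGY hwt hwf
  obtain ⟨e, rfl⟩ := hsurj _ _ hFX hTY d
  refine ⟨w + pX ≫ e ≫ iY, ?_⟩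
  rw [G.map_add, G.map_comp, G.map_comp]
  exact add_eq_of_eq_sub' hd.symm

end Functor

/-- A fully-faithfulness criterion for an exact functor compatible with
torsion pairs (Lemma 2.9 of the paper). -/
theorem statement_15 {A A' : Type*} [Category A] [Abelian A] [Category A'] [Abelian A']
    {T F : A → Prop} {T' F' : A' → Prop}
    (tpA : TorsionPair A T F) (tpA' : TorsionPair A' T' F')
    (G : A' ⥤ A) [G.Additive]
    (hex : ∀ S : ShortComplex A', S.ShortExact → (S.map G).ShortExact)
    (hT : ∀ x : A', T' x → T (G.obj x)) (hF : ∀ x : A', F' x → F (G.obj x))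
    (hffT : ∀ x y : A', T' x → T' y → Function.Bijective (fun g : x ⟶ y => G.map g))
    (hffF : ∀ x y : A', F' x → F' y → Function.Bijective (fun g : x ⟶ y => G.map g))
    (hsurj : ∀ f t : A', F' f → T' t → Function.Surjective (fun g : f ⟶ t => G.map g))
    (hinj : ∀ f t : A', F' f → T' t → ∀ s s' : SES A' f t,
      ExtEquiv A (.base (mapSES A G hex s)) (.base (mapSES A G hex s')) →
        ExtEquiv A' (.base s) (.base s')) :
    G.Full ∧ G.Faithful := by
  obtain ⟨_, _⟩ := (G.exact_tfae.out 0 3).1 hex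
  refine ⟨full_of_torsionPair G hex tpA tpA' hT hF (fun x y hx hy => (hffT x y hx hy).2)
    (fun x y hx hy => (hffF x y hx hy).2) hsurj hinj, faithful_of_reflects_isZero G ?_⟩
  exact fun X => isZero_of_isZero_map G tpA' (fun x hx => (hffT x x hx hx).1)
    (fun x hx => (hffF x x hx hx).1)

end HRS
end
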